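/- Second-order stochastic dominance is equivalent to a dominance relation on the conditional-value-at-risk (average value at risk): Y dominates X in second order if and only if AV@R_α(−Y) ≤ AV@R_α(−X) for all α ∈ [0, 1), where AV@R_α(Z) = inf_{q ∈ ℝ} { q + (1/(1−α)) E[(Z − q)₊] }. -/

import Mathlib

/-!
Write `F_Z(t) = E (t - Z)₊`. The Rockafellar–Uryasev objective of `-Z` at `q` is
`q + c F_Z(-q)`, so pointwise domination `F_Y ≤ F_X` passes to the infima. Conversely, fix `t`
and let `β = P(Y ≤ t)`. Since `β` is a subgradient of `F_Y` at `t`, the infimum defining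
`AV@R_{1-β}(-Y)` is attained at `q = -t`; bounding the infimum for `X` by its value at `-t`
gives `β⁻¹ F_Y(t) ≤ β⁻¹ F_X(t)`. If `β = 0`, then `F_Y(t) = 0` outright.
-/

open MeasureTheory Set

section

variable {Ω : Type*} [MeasurableSpace Ω] {μ : Measure Ω} {Z : Ω → ℝ}

lemma integral_max_sub_eq_zero {q : ℝ} (hq : μ {ω | q ≤ Z ω} = 0) :
    ∫ ω, max (Z ω - q) 0 ∂μ = 0 := by
  refine integral_eq_zero_of_ae ?_
  filter_upwards [measure_eq_zero_iff_ae_notMem.1 hq] with ω hω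
  exact max_eq_right (by simp at hω; linarith)

variable [IsProbabilityMeasure μ]

lemma integrable_max_sub_const (hZ : Integrable Z μ) (q : ℝ) :
    Integrable (fun ω => max (Z ω - q) 0) μ :=
  (hZ.sub (integrable_const q)).pos_part

lemma integral_le_add_mul_integral_max_sub (hZ : Integrable Z μ) {c : ℝ} (hc : 1 ≤ c) (q : ℝ) :
    ∫ ω, Z ω ∂μ ≤ q + c * ∫ ω, max (Z ω - q) 0 ∂μ := by
  have hpos : 0 ≤ ∫ ω, max (Z ω - q) 0 ∂μ := integral_nonneg fun _ => le_max_right _ _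
  have hmean : ∫ ω, Z ω - q ∂μ ≤ ∫ ω, max (Z ω - q) 0 ∂μ :=
    integral_mono (hZ.sub (integrable_const q)) (integrable_max_sub_const hZ q)
      fun _ => le_max_left _ _
  rw [integral_sub hZ (integrable_const q), integral_const, probReal_univ, one_smul] at hmean
  nlinarith

lemma bddBelow_range_add_mul_integral_max_sub (hZ : Integrable Z μ) {c : ℝ} (hc : 1 ≤ c) :
    BddBelow (range fun q => q + c * ∫ ω, max (Z ω - q) 0 ∂μ) :=
  ⟨∫ ω, Z ω ∂μ, forall_mem_range.2 (integral_le_add_mul_integral_max_sub hZ hc)⟩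

lemma integral_max_sub_add_mul_measureReal_le (hZ : Integrable Z μ) (q r : ℝ) :
    ∫ ω, max (Z ω - q) 0 ∂μ + (q - r) * μ.real {ω | q ≤ Z ω} ≤ ∫ ω, max (Z ω - r) 0 ∂μ := by
  set A := {ω | q ≤ Z ω}
  have hA : NullMeasurableSet A μ := hZ.aemeasurable.nullMeasurable measurableSet_Ici
  have hind : Integrable (A.indicator fun _ => q - r) μ := (integrable_const _).indicator₀ hA
  have hpt : ∀ ω, max (Z ω - q) 0 + A.indicator (fun _ => q - r) ω ≤ max (Z ω - r) 0 := by
    intro ω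
    by_cases hω : ω ∈ A
    · rw [indicator_of_mem hω, max_eq_left (sub_nonneg.2 hω)]
      exact le_max_of_le_left (by linarith)
    · rw [indicator_of_notMem hω, max_eq_right (by simp [A] at hω; linarith), add_zero]
      exact le_max_right _ _
  have h : ∫ ω, (max (Z ω - q) 0 + A.indicator (fun _ => q - r) ω) ∂μ
      ≤ ∫ ω, max (Z ω - r) 0 ∂μ :=
    integral_mono ((integrable_max_sub_const hZ q).add hind) (integrable_max_sub_const hZ r) hpt
  rwa [integral_add (integrable_max_sub_const hZ q) hind, integral_indicator₀ hA,
    setIntegral_const, smul_eq_mul, mul_comm] at h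

lemma add_inv_mul_integral_max_sub_le (hZ : Integrable Z μ) {q : ℝ}
    (hq : 0 < μ.real {ω | q ≤ Z ω}) (r : ℝ) :
    q + (μ.real {ω | q ≤ Z ω})⁻¹ * ∫ ω, max (Z ω - q) 0 ∂μ
      ≤ r + (μ.real {ω | q ≤ Z ω})⁻¹ * ∫ ω, max (Z ω - r) 0 ∂μ := by
  have h := mul_le_mul_of_nonneg_left (integral_max_sub_add_mul_measureReal_le hZ q r)
    (inv_nonneg.2 hq.le)
  rw [mul_add, mul_left_comm, inv_mul_cancel₀ hq.ne', mul_one] at h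
  linarith

lemma ciInf_add_inv_mul_integral_max_sub_eq (hZ : Integrable Z μ) {q : ℝ}
    (hq : 0 < μ.real {ω | q ≤ Z ω}) :
    ⨅ r, r + (μ.real {ω | q ≤ Z ω})⁻¹ * ∫ ω, max (Z ω - r) 0 ∂μ
      = q + (μ.real {ω | q ≤ Z ω})⁻¹ * ∫ ω, max (Z ω - q) 0 ∂μ :=
  le_antisymm
    (ciInf_le (bddBelow_range_add_mul_integral_max_sub hZ
      ((one_le_inv₀ hq).2 measureReal_le_one)) q)
    (le_ciInf (add_inv_mul_integral_max_sub_le hZ hq))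

end

theorem second_order_dominance_iff_avar_general
    {Ω : Type*} [MeasurableSpace Ω] (μ : Measure Ω) [IsProbabilityMeasure μ]
    (X Y : Ω → ℝ)
    (hXi : Integrable X μ) (hYi : Integrable Y μ)
    (avar : ℝ → (Ω → ℝ) → ℝ)
    (havar : ∀ (α : ℝ) (Z : Ω → ℝ),
      avar α Z = ⨅ q : ℝ, q + (1 - α)⁻¹ * ∫ ω, max (Z ω - q) 0 ∂μ) :
    (∀ t : ℝ, ∫ ω, max (t - Y ω) 0 ∂μ ≤ ∫ ω, max (t - X ω) 0 ∂μ) ↔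
      (∀ α : ℝ, 0 ≤ α → α < 1 →
        avar α (fun ω => -Y ω) ≤ avar α (fun ω => -X ω)) := by
  constructor
  · intro hssd α hα0 hα1
    have hc : 1 ≤ (1 - α)⁻¹ := (one_le_inv₀ (by linarith)).2 (by linarith)
    rw [havar, havar]
    refine ciInf_mono (bddBelow_range_add_mul_integral_max_sub hYi.neg hc) fun q => ?_
    have h : ∫ ω, max (-Y ω - q) 0 ∂μ ≤ ∫ ω, max (-X ω - q) 0 ∂μ := by
      simpa only [neg_sub_comm] using hssd (-q)
    exact add_le_add_right (mul_le_mul_of_nonneg_left h (zero_le_one.trans hc)) q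
  · intro hdom t
    set β := μ.real {ω | -t ≤ -Y ω}
    rcases measureReal_nonneg.eq_or_lt with hβ | hβ
    · have h := integral_max_sub_eq_zero (μ := μ) (Z := fun ω => -Y ω) (q := -t)
        ((measureReal_eq_zero_iff).1 hβ.symm)
      simp only [neg_sub_neg] at h
      exact h.le.trans (integral_nonneg fun _ => le_max_right _ _)
    · have hβ1 : β ≤ 1 := measureReal_le_one
      have h := hdom (1 - β) (by linarith) (by linarith)
      rw [havar, havar, sub_sub_cancel,
        ciInf_add_inv_mul_integral_max_sub_eq (Z := fun ω => -Y ω) hYi.neg hβ] at h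
      have h' := h.trans <| ciInf_le (bddBelow_range_add_mul_integral_max_sub
        (Z := fun ω => -X ω) hXi.neg ((one_le_inv₀ hβ).2 hβ1)) (-t)
      simp only [neg_sub_neg, add_le_add_iff_left] at h'
      exact le_of_mul_le_mul_left h' (inv_pos.2 hβ)

/-- Second-order stochastic dominance of `Y` over `X` is equivalent to
`AV@R_α(−Y) ≤ AV@R_α(−X)` for all `α ∈ [0,1)`, where `AV@R` is given by the
Rockafellar–Uryasev formula. -/
theorem second_order_dominance_iff_avar
    {Ω : Type*} [MeasurableSpace Ω] (μ : Measure Ω) [IsProbabilityMeasure μ]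
    (X Y : Ω → ℝ) (hX : Measurable X) (hY : Measurable Y)
    (hXi : Integrable X μ) (hYi : Integrable Y μ)
    (avar : ℝ → (Ω → ℝ) → ℝ)
    (havar : ∀ (α : ℝ) (Z : Ω → ℝ),
      avar α Z = ⨅ q : ℝ, q + (1 - α)⁻¹ * ∫ ω, max (Z ω - q) 0 ∂μ) :
    (∀ t : ℝ, ∫ ω, max (t - Y ω) 0 ∂μ ≤ ∫ ω, max (t - X ω) 0 ∂μ) ↔
      (∀ α : ℝ, 0 ≤ α → α < 1 →
        avar α (fun ω => -Y ω) ≤ avar α (fun ω => -X ω)) :=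
  second_order_dominance_iff_avar_general μ X Y hXi hYi avar havar
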